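/- arXiv:2305.06648 — 2 statements merged into one kernel-verified Lean document; each statement's English description precedes it below -/
import Mathlib

section
/- Under the same assumptions, with additionally K_f ≥ 1 and R_Θ ≥ 1, let H and H̃ solve the ODE with parameters θ and θ̃ respectively (both in the class with ‖·‖_{1,∞} ≤ R_Θ) and the same initial condition x ∈ B(0,R_X). Then ‖H_1 − H̃_1‖ ≤ 2 M K_f R_Θ exp(2 K_f R_Θ) · ‖θ − θ̃‖_{1,∞}. -/
/-!
`H'` is an approximate trajectory of the `Kf RΘ`-Lipschitz vector field
`x ↦ ∑ i, θ t i • f i x` of `H`, with defect `‖∑ i, (θ' t i - θ t i) • f i (H' t)‖ ≤ δ B`,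
where `δ = ‖θ - θ'‖_{1,∞}` and `B` bounds `‖f i (H' t)‖`; Grönwall then gives
`‖H 1 - H' 1‖ ≤ δ B exp (Kf RΘ)`. Comparing `H'` in the same way with the constant trajectory
`H' 0` gives `B = M exp (Kf RΘ)`, and `1 ≤ 2 Kf RΘ` absorbs the remaining constant.
-/

open Set Real

variable {ι E F : Type*} [Fintype ι] [SeminormedAddCommGroup F] [NormedSpace ℝ F]

theorem norm_sum_smul_le_of_le {c : ι → ℝ} {v : ι → F} {R B : ℝ} (hc : ∑ i, |c i| ≤ R)
    (hB : 0 ≤ B) (hv : ∀ i, ‖v i‖ ≤ B) : ‖∑ i, c i • v i‖ ≤ R * B :=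
  calc ‖∑ i, c i • v i‖ ≤ ∑ i, |c i| * ‖v i‖ := by
        simpa only [norm_smul, Real.norm_eq_abs] using norm_sum_le Finset.univ fun i ↦ c i • v i
    _ ≤ ∑ i, |c i| * B := by gcongr; exact hv _
    _ = (∑ i, |c i|) * B := (Finset.sum_mul ..).symm
    _ ≤ R * B := by gcongr

theorem lipschitzWith_sum_smul [SeminormedAddCommGroup E] {c : ι → ℝ} {f : ι → E → F}
    {Kf R : ℝ} (hKf : 0 ≤ Kf) (hf : ∀ i x y, ‖f i x - f i y‖ ≤ Kf * ‖x - y‖) (hc : ∑ i, |c i| ≤ R) :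
    LipschitzWith (Kf * R).toNNReal (fun x ↦ ∑ i, c i • f i x) := by
  have hR : 0 ≤ R := (Finset.sum_nonneg fun i _ ↦ abs_nonneg (c i)).trans hc
  refine LipschitzWith.of_dist_le_mul fun x y ↦ ?_
  rw [Real.coe_toNNReal _ (mul_nonneg hKf hR), dist_eq_norm, dist_eq_norm,
    ← Finset.sum_sub_distrib]
  simp_rw [← smul_sub]
  calc ‖∑ i, c i • (f i x - f i y)‖ ≤ R * (Kf * ‖x - y‖) :=
        norm_sum_smul_le_of_le hc (by positivity) fun i ↦ hf i x y
    _ = Kf * R * ‖x - y‖ := by ring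

theorem mul_gronwallBound_zero (Kf R M x : ℝ) :
    Kf * gronwallBound 0 (Kf * R) (R * M) x = M * (exp (Kf * R * x) - 1) := by
  by_cases hK : Kf * R = 0
  · simp [hK, gronwallBound_K0, ← mul_assoc]
  · have hKf : Kf ≠ 0 := left_ne_zero_of_mul hK
    have hR : R ≠ 0 := right_ne_zero_of_mul hK
    rw [gronwallBound_of_K_ne_0 hK]
    field_simp
    ring

theorem gronwallBound_zero_le {K ε x : ℝ} (hK : 0 ≤ K) (hε : 0 ≤ ε) :
    gronwallBound 0 K ε x ≤ ε * x * exp (K * x) := by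
  rcases hK.eq_or_lt with rfl | hK
  · simp [gronwallBound_K0]
  simp only [gronwallBound_of_K_ne_0 hK.ne', zero_mul, zero_add]
  rw [div_mul_eq_mul_div, div_le_iff₀ hK]
  have hexp : exp (K * x) - 1 ≤ K * x * exp (K * x) := by
    have h := mul_le_mul_of_nonneg_right (one_sub_le_exp_neg (K * x)) (exp_pos (K * x)).le
    rw [← exp_add, neg_add_cancel, exp_zero] at h
    linarith
  calc ε * (exp (K * x) - 1) ≤ ε * (K * x * exp (K * x)) := by gcongr
    _ = ε * x * exp (K * x) * K := by ring

theorem sum_abs_sub_le_iSup {α : Type*} {s : Set α} {u v : α → ι → ℝ} {R : ℝ}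
    (hu : ∀ t ∈ s, ∑ i, |u t i| ≤ R) (hv : ∀ t ∈ s, ∑ i, |v t i| ≤ R) :
    ∀ t ∈ s, ∑ i, |u t i - v t i| ≤ ⨆ t : s, ∑ i, |u (t : α) i - v (t : α) i| := by
  refine fun t ht ↦ le_ciSup (f := fun t : s ↦ ∑ i, |u t i - v t i|) ⟨R + R, ?_⟩ ⟨t, ht⟩
  rintro _ ⟨⟨t, ht⟩, rfl⟩
  calc ∑ i, |u t i - v t i| ≤ ∑ i, (|u t i| + |v t i|) := by gcongr; exact abs_sub _ _
    _ ≤ R + R := Finset.sum_add_distrib.trans_le (add_le_add (hu t ht) (hv t ht))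

section ParameterizedODE

variable [NormedAddCommGroup E] [NormedSpace ℝ E] {θ : ℝ → ι → ℝ} {f : ι → E → E}
  {H G G' : ℝ → E} {Kf R a b : ℝ}

theorem HasDerivWithinAt.Ici_of_Icc {F : ℝ → E} {F' : E} {t : ℝ} (ht : t ∈ Ico a b)
    (h : HasDerivWithinAt F F' (Icc a b) t) : HasDerivWithinAt F F' (Ici t) t :=
  h.mono_of_mem_nhdsWithin (Icc_mem_nhdsGE_of_mem ht)

theorem dist_le_gronwallBound_of_approx_solution {ε : ℝ} (hKf : 0 ≤ Kf)
    (hf : ∀ i x y, ‖f i x - f i y‖ ≤ Kf * ‖x - y‖) (hθ : ∀ t ∈ Icc a b, ∑ i, |θ t i| ≤ R)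
    (hH : ∀ t ∈ Icc a b, HasDerivWithinAt H (∑ i, θ t i • f i (H t)) (Icc a b) t)
    (hG : ∀ t ∈ Icc a b, HasDerivWithinAt G (G' t) (Icc a b) t)
    (hGε : ∀ t ∈ Icc a b, dist (G' t) (∑ i, θ t i • f i (G t)) ≤ ε) :
    ∀ t ∈ Icc a b, dist (H t) (G t) ≤ gronwallBound (dist (H a) (G a)) (Kf * R) ε (t - a) := by
  intro t ht
  have hR : 0 ≤ R :=
    (Finset.sum_nonneg fun i _ ↦ abs_nonneg (θ a i)).trans (hθ a ⟨le_rfl, ht.1.trans ht.2⟩)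
  have key := dist_le_of_approx_trajectories_ODE_of_mem (v := fun t x ↦ ∑ i, θ t i • f i x)
    (s := fun _ ↦ univ)
    (fun t ht ↦ (lipschitzWith_sum_smul hKf hf (hθ t (Ico_subset_Icc_self ht))).lipschitzOnWith)
    (fun t ht ↦ (hH t ht).continuousWithinAt)
    (fun t ht ↦ (hH t (Ico_subset_Icc_self ht)).Ici_of_Icc ht) (εf := 0) (by simp)
    (fun _ _ ↦ trivial) (fun t ht ↦ (hG t ht).continuousWithinAt)
    (fun t ht ↦ (hG t (Ico_subset_Icc_self ht)).Ici_of_Icc ht)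
    (fun t ht ↦ hGε t (Ico_subset_Icc_self ht)) (fun _ _ ↦ trivial) le_rfl t ht
  rwa [Real.coe_toNNReal _ (mul_nonneg hKf hR), zero_add] at key

theorem norm_apply_solution_le_mul_exp {M : ℝ} (hKf : 0 ≤ Kf)
    (hf : ∀ i x y, ‖f i x - f i y‖ ≤ Kf * ‖x - y‖) (hM : 0 ≤ M) (hfM : ∀ i, ‖f i (H a)‖ ≤ M)
    (hθ : ∀ t ∈ Icc a b, ∑ i, |θ t i| ≤ R)
    (hH : ∀ t ∈ Icc a b, HasDerivWithinAt H (∑ i, θ t i • f i (H t)) (Icc a b) t) :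
    ∀ t ∈ Icc a b, ∀ i, ‖f i (H t)‖ ≤ M * exp (Kf * R * (t - a)) := by
  intro t ht i
  have hdist : dist (H t) (H a) ≤ gronwallBound 0 (Kf * R) (R * M) (t - a) := by
    simpa using dist_le_gronwallBound_of_approx_solution (G := fun _ ↦ H a) (G' := 0) hKf hf
      hθ hH (fun _ _ ↦ hasDerivWithinAt_const _ _ _)
      (fun t ht ↦ by simpa using norm_sum_smul_le_of_le (hθ t ht) hM hfM) t ht
  calc ‖f i (H t)‖ ≤ ‖f i (H a)‖ + ‖f i (H t) - f i (H a)‖ := norm_le_insert' _ _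
    _ ≤ M + Kf * dist (H t) (H a) := add_le_add (hfM i) (dist_eq_norm (H t) (H a) ▸ hf i _ _)
    _ ≤ M + Kf * gronwallBound 0 (Kf * R) (R * M) (t - a) := by gcongr
    _ = M * exp (Kf * R * (t - a)) := by rw [mul_gronwallBound_zero]; ring

theorem dist_solutions_le_gronwallBound {θ' : ℝ → ι → ℝ} {B δ : ℝ} (hKf : 0 ≤ Kf)
    (hf : ∀ i x y, ‖f i x - f i y‖ ≤ Kf * ‖x - y‖) (hθ : ∀ t ∈ Icc a b, ∑ i, |θ t i| ≤ R)
    (hB : 0 ≤ B) (hfB : ∀ t ∈ Icc a b, ∀ i, ‖f i (G t)‖ ≤ B)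
    (hδ : ∀ t ∈ Icc a b, ∑ i, |θ t i - θ' t i| ≤ δ)
    (hH : ∀ t ∈ Icc a b, HasDerivWithinAt H (∑ i, θ t i • f i (H t)) (Icc a b) t)
    (hG : ∀ t ∈ Icc a b, HasDerivWithinAt G (∑ i, θ' t i • f i (G t)) (Icc a b) t) :
    ∀ t ∈ Icc a b, dist (H t) (G t) ≤ gronwallBound (dist (H a) (G a)) (Kf * R) (δ * B) (t - a) :=
  dist_le_gronwallBound_of_approx_solution hKf hf hθ hH hG fun t ht ↦ by
    rw [dist_eq_norm, ← Finset.sum_sub_distrib]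
    simp_rw [← sub_smul]
    exact norm_sum_smul_le_of_le (by simpa only [abs_sub_comm] using hδ t ht) hB (hfB t ht)

end ParameterizedODE

/-- Lipschitz continuity of the parameterized ODE flow map in the parameter θ,
with respect to the (1,∞)-norm `‖θ‖ = sup_{t∈[0,1]} ∑ᵢ |θᵢ(t)|`. -/
theorem stmt2 {d m : ℕ} (Kf M RX RΘ : ℝ) (hKf : 1 ≤ Kf) (hRΘ : 1 ≤ RΘ)
    (f : Fin m → EuclideanSpace ℝ (Fin d) → EuclideanSpace ℝ (Fin d))
    (hf : ∀ i, ∀ a b, ‖f i a - f i b‖ ≤ Kf * ‖a - b‖)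
    (hM : ∀ i, ∀ y : EuclideanSpace ℝ (Fin d), ‖y‖ ≤ RX → ‖f i y‖ ≤ M)
    (θ θ' : ℝ → Fin m → ℝ)
    (hθb : ∀ t ∈ Set.Icc (0:ℝ) 1, ∑ i, |θ t i| ≤ RΘ)
    (hθ'b : ∀ t ∈ Set.Icc (0:ℝ) 1, ∑ i, |θ' t i| ≤ RΘ)
    (H H' : ℝ → EuclideanSpace ℝ (Fin d))
    (hsol : ∀ t ∈ Set.Icc (0:ℝ) 1,
      HasDerivWithinAt H (∑ i, θ t i • f i (H t)) (Set.Icc (0:ℝ) 1) t)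
    (hsol' : ∀ t ∈ Set.Icc (0:ℝ) 1,
      HasDerivWithinAt H' (∑ i, θ' t i • f i (H' t)) (Set.Icc (0:ℝ) 1) t)
    (hinit : H 0 = H' 0) (hx : ‖H 0‖ ≤ RX) :
    ‖H 1 - H' 1‖ ≤ 2 * M * Kf * RΘ * Real.exp (2 * Kf * RΘ) *
      (⨆ t : Set.Icc (0:ℝ) 1, ∑ i, |θ (t : ℝ) i - θ' (t : ℝ) i|) := by
  set δ := ⨆ t : Icc (0:ℝ) 1, ∑ i, |θ (t : ℝ) i - θ' (t : ℝ) i|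
  have hKf0 : 0 ≤ Kf := zero_le_one.trans hKf
  have h1 : (1 : ℝ) ∈ Icc (0 : ℝ) 1 := right_mem_Icc.2 zero_le_one
  have hδ : ∀ t ∈ Icc (0:ℝ) 1, ∑ i, |θ t i - θ' t i| ≤ δ := sum_abs_sub_le_iSup hθb hθ'b
  have hδ0 : 0 ≤ δ := (Finset.sum_nonneg fun i _ ↦ abs_nonneg _).trans (hδ 1 h1)
  rcases isEmpty_or_nonempty (Fin m) with hm | ⟨⟨i₀⟩⟩
  · -- without fields `M` may be negative, but both solutions are constant and `δ = 0`
    have key := dist_solutions_le_gronwallBound (B := 0) (δ := 0) hKf0 hf hθb le_rfl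
      (fun _ _ i ↦ isEmptyElim i) (fun _ _ ↦ by simp) hsol hsol' 1 h1
    simp only [hinit, dist_self, mul_zero, gronwallBound_ε0_δ0, dist_eq_norm] at key
    have hδ_eq : δ = 0 := by simp [δ]
    rwa [hδ_eq, mul_zero]
  have hM0 : 0 ≤ M := (norm_nonneg _).trans (hM i₀ _ hx)
  have hK0 : 0 ≤ Kf * RΘ := by positivity
  have hB : ∀ t ∈ Icc (0:ℝ) 1, ∀ i, ‖f i (H' t)‖ ≤ M * exp (Kf * RΘ) := fun t ht i ↦
    (norm_apply_solution_le_mul_exp hKf0 hf hM0 (fun i ↦ hM i _ (hinit ▸ hx)) hθ'b hsol'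
      t ht i).trans <| by
        rw [sub_zero]
        exact mul_le_mul_of_nonneg_left (exp_le_exp.2 (mul_le_of_le_one_right hK0 ht.2)) hM0
  calc ‖H 1 - H' 1‖ ≤ gronwallBound 0 (Kf * RΘ) (δ * (M * exp (Kf * RΘ))) 1 := by
        simpa [hinit, dist_eq_norm] using
          dist_solutions_le_gronwallBound hKf0 hf hθb (by positivity) hB hδ hsol hsol' 1 h1
    _ ≤ δ * (M * exp (Kf * RΘ)) * 1 * exp (Kf * RΘ * 1) :=
        gronwallBound_zero_le hK0 (by positivity)
    _ = M * δ * exp (2 * Kf * RΘ) * 1 := by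
        rw [mul_one, mul_one, mul_assoc 2, two_mul, exp_add]; ring
    _ ≤ M * δ * exp (2 * Kf * RΘ) * (2 * Kf * RΘ) := by gcongr; nlinarith
    _ = 2 * M * Kf * RΘ * exp (2 * Kf * RΘ) * δ := by ring
end

section
/- With the residual network defined as above, for two weight tensors W and W̃ both satisfying sup_k ‖W_k‖_{1,1} ≤ R_W, and any input x with ‖x‖ ≤ R_X: ‖F_W(x) − F_{W̃}(x)‖ ≤ (R_X / R_W) exp(2 K_σ R_W) · ‖W − W̃‖_{1,1,∞}, where ‖W‖_{1,1,∞} = sup_{1≤k≤L} Σ_{i,j} |W_{k,i,j}|. -/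
open Finset Real

lemma aux_abs_le_sqrtsum {d : ℕ} (v : Fin d → ℝ) (j : Fin d) :
    |v j| ≤ Real.sqrt (∑ i, v i ^ 2) := by
  rw [show |v j| = Real.sqrt ((v j)^2) from (Real.sqrt_sq_eq_abs _).symm]
  apply Real.sqrt_le_sqrt
  exact Finset.single_le_sum (fun i _ => sq_nonneg (v i)) (Finset.mem_univ j)

lemma aux_l2_le_l1 {d : ℕ} (a : Fin d → ℝ) (ha : ∀ i, 0 ≤ a i) :
    Real.sqrt (∑ i, a i ^ 2) ≤ ∑ i, a i := by
  have hs : 0 ≤ ∑ i, a i := Finset.sum_nonneg fun i _ => ha i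
  rw [show ∑ i, a i = Real.sqrt ((∑ i, a i)^2) from (Real.sqrt_sq hs).symm]
  apply Real.sqrt_le_sqrt
  rw [sq, Finset.sum_mul]
  exact Finset.sum_le_sum fun i _ => by
    have := Finset.single_le_sum (fun i _ => ha i) (Finset.mem_univ i)
    nlinarith [ha i]

lemma aux_tri {d : ℕ} (u v : Fin d → ℝ) :
    Real.sqrt (∑ i, (u i + v i) ^ 2) ≤
      Real.sqrt (∑ i, u i ^ 2) + Real.sqrt (∑ i, v i ^ 2) := by
  have h := norm_add_le ((WithLp.equiv 2 (Fin d → ℝ)).symm u)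
    ((WithLp.equiv 2 (Fin d → ℝ)).symm v)
  simpa [EuclideanSpace.norm_eq, Real.norm_eq_abs, sq_abs] using h

lemma aux_scal {d : ℕ} (c : ℝ) (v : Fin d → ℝ) :
    Real.sqrt (∑ i, (c * v i) ^ 2) = |c| * Real.sqrt (∑ i, v i ^ 2) := by
  simp_rw [mul_pow, ← Finset.mul_sum]
  rw [Real.sqrt_mul (sq_nonneg c), Real.sqrt_sq_eq_abs]

lemma aux_matvec {d : ℕ} (A : Matrix (Fin d) (Fin d) ℝ) (v : Fin d → ℝ) :
    Real.sqrt (∑ i, (∑ j, A i j * v j) ^ 2) ≤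
      (∑ i, ∑ j, |A i j|) * Real.sqrt (∑ j, v j ^ 2) := by
  set M := Real.sqrt (∑ j, v j ^ 2) with hM
  have hM0 : 0 ≤ M := Real.sqrt_nonneg _
  have h1 : ∀ i, |∑ j, A i j * v j| ≤ (∑ j, |A i j|) * M := by
    intro i
    calc |∑ j, A i j * v j| ≤ ∑ j, |A i j * v j| := Finset.abs_sum_le_sum_abs _ _
      _ = ∑ j, |A i j| * |v j| := by simp [abs_mul]
      _ ≤ ∑ j, |A i j| * M :=
        Finset.sum_le_sum fun j _ =>
          mul_le_mul_of_nonneg_left (aux_abs_le_sqrtsum v j) (abs_nonneg _)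
      _ = (∑ j, |A i j|) * M := by rw [Finset.sum_mul]
  calc Real.sqrt (∑ i, (∑ j, A i j * v j) ^ 2)
      ≤ Real.sqrt (∑ i, ((∑ j, |A i j|) * M) ^ 2) := by
        apply Real.sqrt_le_sqrt
        apply Finset.sum_le_sum
        intro i _
        have := h1 i
        nlinarith [abs_nonneg (∑ j, A i j * v j), le_abs_self (∑ j, A i j * v j),
          neg_abs_le (∑ j, A i j * v j)]
    _ ≤ ∑ i, (∑ j, |A i j|) * M := by
        apply aux_l2_le_l1
        intro i
        exact mul_nonneg (Finset.sum_nonneg fun j _ => abs_nonneg _) hM0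
    _ = (∑ i, ∑ j, |A i j|) * M := by rw [Finset.sum_mul]

lemma aux_sigma {d : ℕ} (σ : ℝ → ℝ) (Kσ : ℝ) (hK : 0 ≤ Kσ)
    (hσ : ∀ a b, |σ a - σ b| ≤ Kσ * |a - b|) (a b : Fin d → ℝ) :
    Real.sqrt (∑ i, (σ (a i) - σ (b i)) ^ 2) ≤
      Kσ * Real.sqrt (∑ i, (a i - b i) ^ 2) := by
  have : ∀ i, (σ (a i) - σ (b i))^2 ≤ Kσ^2 * (a i - b i)^2 := by
    intro i
    have h := hσ (a i) (b i)
    nlinarith [abs_nonneg (σ (a i) - σ (b i)), sq_abs (σ (a i) - σ (b i)),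
      sq_abs (a i - b i), abs_nonneg (a i - b i)]
  calc Real.sqrt (∑ i, (σ (a i) - σ (b i)) ^ 2)
      ≤ Real.sqrt (∑ i, Kσ^2 * (a i - b i) ^ 2) :=
        Real.sqrt_le_sqrt (Finset.sum_le_sum fun i _ => this i)
    _ = Kσ * Real.sqrt (∑ i, (a i - b i) ^ 2) := by
        rw [← Finset.mul_sum, Real.sqrt_mul (sq_nonneg Kσ), Real.sqrt_sq hK]



/-- Lipschitz continuity of the residual network output with respect to its weights,
uniform in the depth L:
`‖F_W(x) - F_W̃(x)‖ ≤ (R_X/R_W) exp(2 K_σ R_W) ‖W - W̃‖_{1,1,∞}`. -/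
theorem stmt9 (d L : ℕ) (hL : 0 < L) (σ : ℝ → ℝ) (Kσ RW RX : ℝ) (hRW : 0 < RW)
    (hσ : ∀ a b, |σ a - σ b| ≤ Kσ * |a - b|) (hσ0 : σ 0 = 0)
    (W W' : ℕ → Matrix (Fin d) (Fin d) ℝ)
    (hW : ∀ k, 1 ≤ k → k ≤ L → ∑ i, ∑ j, |W k i j| ≤ RW)
    (hW' : ∀ k, 1 ≤ k → k ≤ L → ∑ i, ∑ j, |W' k i j| ≤ RW)
    (H H' : ℕ → Fin d → ℝ)
    (hrec : ∀ k < L, ∀ i,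
      H (k + 1) i = H k i + (L : ℝ)⁻¹ * ∑ j, W (k + 1) i j * σ (H k j))
    (hrec' : ∀ k < L, ∀ i,
      H' (k + 1) i = H' k i + (L : ℝ)⁻¹ * ∑ j, W' (k + 1) i j * σ (H' k j))
    (hinit : H 0 = H' 0) (hx : Real.sqrt (∑ i, H 0 i ^ 2) ≤ RX) :
    Real.sqrt (∑ i, (H L i - H' L i) ^ 2) ≤
      RX / RW * Real.exp (2 * Kσ * RW) *
        (⨆ k : Fin L, ∑ i, ∑ j, |W ((k : ℕ) + 1) i j - W' ((k : ℕ) + 1) i j|) := by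
  have hL' : (0:ℝ) < L := by exact_mod_cast hL
  have hℓ0 : (0:ℝ) ≤ (L:ℝ)⁻¹ := by positivity
  have hK : 0 ≤ Kσ := by
    have h := hσ 1 0
    have h0 : |(1:ℝ) - 0| = 1 := by norm_num
    rw [h0, mul_one] at h
    exact le_trans (abs_nonneg _) h
  have hRX : 0 ≤ RX := le_trans (Real.sqrt_nonneg _) hx
  set Δ := ⨆ k : Fin L, ∑ i, ∑ j, |W ((k : ℕ) + 1) i j - W' ((k : ℕ) + 1) i j| with hΔdef
  have hbdd : BddAbove (Set.range fun k : Fin L =>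
      ∑ i, ∑ j, |W ((k : ℕ) + 1) i j - W' ((k : ℕ) + 1) i j|) :=
    Set.Finite.bddAbove (Set.finite_range _)
  have hΔge : ∀ k : Fin L,
      ∑ i, ∑ j, |W ((k : ℕ) + 1) i j - W' ((k : ℕ) + 1) i j| ≤ Δ :=
    fun k => le_ciSup hbdd k
  have hΔ0 : 0 ≤ Δ :=
    le_trans (Finset.sum_nonneg fun i _ => Finset.sum_nonneg fun j _ => abs_nonneg _)
      (hΔge ⟨0, hL⟩)
  set q := Kσ * RW * (L:ℝ)⁻¹ with hqdef
  have hq : 0 ≤ q := by positivity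
  -- growth bound on H'
  have hgrow : ∀ k, k ≤ L → Real.sqrt (∑ i, H' k i ^ 2) ≤ RX * (1 + q) ^ k := by
    intro k
    induction k with
    | zero => intro _; simpa [← hinit] using hx
    | succ k ih =>
      intro hk1
      have hkL : k < L := Nat.lt_of_succ_le hk1
      have ihk := ih (Nat.le_of_lt hkL)
      have hP0 : (0:ℝ) ≤ (1 + q) ^ k := by positivity
      have hsig : Real.sqrt (∑ j, σ (H' k j) ^ 2) ≤
          Kσ * Real.sqrt (∑ j, H' k j ^ 2) := by
        have h := aux_sigma σ Kσ hK hσ (H' k) (fun _ => 0)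
        simpa [hσ0] using h
      calc Real.sqrt (∑ i, H' (k+1) i ^ 2)
          = Real.sqrt (∑ i, (H' k i + (L:ℝ)⁻¹ * ∑ j, W' (k+1) i j * σ (H' k j)) ^ 2) := by
            congr 1; apply Finset.sum_congr rfl; intro i _; rw [hrec' k hkL i]
        _ ≤ Real.sqrt (∑ i, H' k i ^ 2) +
            Real.sqrt (∑ i, ((L:ℝ)⁻¹ * ∑ j, W' (k+1) i j * σ (H' k j)) ^ 2) :=
            aux_tri _ _
        _ = Real.sqrt (∑ i, H' k i ^ 2) +
            (L:ℝ)⁻¹ * Real.sqrt (∑ i, (∑ j, W' (k+1) i j * σ (H' k j)) ^ 2) := by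
            rw [aux_scal, abs_of_nonneg hℓ0]
        _ ≤ Real.sqrt (∑ i, H' k i ^ 2) +
            (L:ℝ)⁻¹ * ((∑ i, ∑ j, |W' (k+1) i j|) * Real.sqrt (∑ j, σ (H' k j) ^ 2)) := by
            gcongr
            exact aux_matvec _ _
        _ ≤ RX * (1 + q) ^ k + (L:ℝ)⁻¹ * (RW * (Kσ * (RX * (1 + q) ^ k))) := by
            have hWb := hW' (k+1) (Nat.succ_le_succ (Nat.zero_le k)) hk1
            have h2 : Real.sqrt (∑ j, σ (H' k j) ^ 2) ≤ Kσ * (RX * (1 + q) ^ k) :=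
              le_trans hsig (mul_le_mul_of_nonneg_left ihk hK)
            have h3 : (∑ i, ∑ j, |W' (k+1) i j|) * Real.sqrt (∑ j, σ (H' k j) ^ 2)
                ≤ RW * (Kσ * (RX * (1 + q) ^ k)) :=
              mul_le_mul hWb h2 (Real.sqrt_nonneg _) hRW.le
            exact add_le_add ihk (mul_le_mul_of_nonneg_left h3 hℓ0)
        _ = RX * (1 + q) ^ (k+1) := by rw [hqdef, pow_succ]; ring
  -- difference bound
  have hdiff : ∀ k, k ≤ L → Real.sqrt (∑ i, (H k i - H' k i) ^ 2) ≤
      (k:ℝ) * (L:ℝ)⁻¹ * Kσ * RX * Δ * (1 + q) ^ k := by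
    intro k
    induction k with
    | zero => intro _; simp [hinit]
    | succ k ih =>
      intro hk1
      have hkL : k < L := Nat.lt_of_succ_le hk1
      have ihk := ih (Nat.le_of_lt hkL)
      have hP0 : (0:ℝ) ≤ (1 + q) ^ k := by positivity
      have hgk := hgrow k (Nat.le_of_lt hkL)
      have hiden : ∀ i, H (k+1) i - H' (k+1) i =
          (H k i - H' k i) +
            ((L:ℝ)⁻¹ * (∑ j, W (k+1) i j * (σ (H k j) - σ (H' k j))) +
             (L:ℝ)⁻¹ * (∑ j, (W (k+1) i j - W' (k+1) i j) * σ (H' k j))) := by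
        intro i
        rw [hrec k hkL i, hrec' k hkL i]
        have hsum : (∑ j, W (k+1) i j * (σ (H k j) - σ (H' k j))) +
            (∑ j, (W (k+1) i j - W' (k+1) i j) * σ (H' k j)) =
            (∑ j, W (k+1) i j * σ (H k j)) - ∑ j, W' (k+1) i j * σ (H' k j) := by
          rw [← Finset.sum_add_distrib, ← Finset.sum_sub_distrib]
          apply Finset.sum_congr rfl; intros; ring
        linear_combination (-(L:ℝ)⁻¹) * hsum
      have hsig1 : Real.sqrt (∑ j, (σ (H k j) - σ (H' k j)) ^ 2) ≤
          Kσ * Real.sqrt (∑ j, (H k j - H' k j) ^ 2) := aux_sigma σ Kσ hK hσ _ _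
      have hsig2 : Real.sqrt (∑ j, σ (H' k j) ^ 2) ≤
          Kσ * Real.sqrt (∑ j, H' k j ^ 2) := by
        have h := aux_sigma σ Kσ hK hσ (H' k) (fun _ => 0)
        simpa [hσ0] using h
      set e := Real.sqrt (∑ i, (H k i - H' k i) ^ 2) with hedef
      have he0 : 0 ≤ e := Real.sqrt_nonneg _
      have hB : Real.sqrt (∑ i, ((L:ℝ)⁻¹ * (∑ j, W (k+1) i j * (σ (H k j) - σ (H' k j)))) ^ 2)
          ≤ (L:ℝ)⁻¹ * (RW * (Kσ * e)) := by
        rw [aux_scal, abs_of_nonneg hℓ0]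
        gcongr
        calc Real.sqrt (∑ i, (∑ j, W (k+1) i j * (σ (H k j) - σ (H' k j))) ^ 2)
            ≤ (∑ i, ∑ j, |W (k+1) i j|) * Real.sqrt (∑ j, (σ (H k j) - σ (H' k j)) ^ 2) :=
              aux_matvec _ _
          _ ≤ RW * (Kσ * e) := by
              apply mul_le_mul (hW (k+1) (Nat.succ_le_succ (Nat.zero_le k)) hk1)
                hsig1 (Real.sqrt_nonneg _) hRW.le
      have hC : Real.sqrt (∑ i, ((L:ℝ)⁻¹ * (∑ j, (W (k+1) i j - W' (k+1) i j) * σ (H' k j))) ^ 2)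
          ≤ (L:ℝ)⁻¹ * (Δ * (Kσ * (RX * (1 + q) ^ k))) := by
        rw [aux_scal, abs_of_nonneg hℓ0]
        gcongr
        calc Real.sqrt (∑ i, (∑ j, (W (k+1) i j - W' (k+1) i j) * σ (H' k j)) ^ 2)
            ≤ (∑ i, ∑ j, |W (k+1) i j - W' (k+1) i j|) * Real.sqrt (∑ j, σ (H' k j) ^ 2) :=
              aux_matvec (fun i j => W (k+1) i j - W' (k+1) i j) _
          _ ≤ Δ * (Kσ * (RX * (1 + q) ^ k)) := by
              apply mul_le_mul (hΔge ⟨k, hkL⟩) _ (Real.sqrt_nonneg _) hΔ0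
              calc Real.sqrt (∑ j, σ (H' k j) ^ 2)
                  ≤ Kσ * Real.sqrt (∑ j, H' k j ^ 2) := hsig2
                _ ≤ Kσ * (RX * (1 + q) ^ k) := by gcongr
      calc Real.sqrt (∑ i, (H (k+1) i - H' (k+1) i) ^ 2)
          = Real.sqrt (∑ i, ((H k i - H' k i) +
              ((L:ℝ)⁻¹ * (∑ j, W (k+1) i j * (σ (H k j) - σ (H' k j))) +
               (L:ℝ)⁻¹ * (∑ j, (W (k+1) i j - W' (k+1) i j) * σ (H' k j)))) ^ 2) := by
            congr 1; apply Finset.sum_congr rfl; intro i _; rw [hiden i]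
        _ ≤ e + Real.sqrt (∑ i,
              ((L:ℝ)⁻¹ * (∑ j, W (k+1) i j * (σ (H k j) - σ (H' k j))) +
               (L:ℝ)⁻¹ * (∑ j, (W (k+1) i j - W' (k+1) i j) * σ (H' k j))) ^ 2) :=
            aux_tri _ _
        _ ≤ e + ((L:ℝ)⁻¹ * (RW * (Kσ * e)) + (L:ℝ)⁻¹ * (Δ * (Kσ * (RX * (1 + q) ^ k)))) := by
            have := aux_tri (d := d)
              (fun i => (L:ℝ)⁻¹ * (∑ j, W (k+1) i j * (σ (H k j) - σ (H' k j))))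
              (fun i => (L:ℝ)⁻¹ * (∑ j, (W (k+1) i j - W' (k+1) i j) * σ (H' k j)))
            have h2 := le_trans this (add_le_add hB hC)
            linarith
        _ ≤ ((k:ℝ)+1) * (L:ℝ)⁻¹ * Kσ * RX * Δ * (1 + q) ^ (k+1) := by
            rw [hqdef] at ihk ⊢
            have hk0 : (0:ℝ) ≤ (k:ℝ) := Nat.cast_nonneg k
            rw [pow_succ]
            nlinarith [mul_le_mul_of_nonneg_right ihk
                (show (0:ℝ) ≤ 1 + Kσ * RW * (L:ℝ)⁻¹ by positivity),
              mul_nonneg (mul_nonneg (mul_nonneg (mul_nonneg hℓ0 hK) hRX) hΔ0) hP0,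
              mul_nonneg hK hRX, mul_nonneg (mul_nonneg hK hRW.le) hℓ0]
        _ = (((k:ℕ)+1 : ℕ):ℝ) * (L:ℝ)⁻¹ * Kσ * RX * Δ * (1 + q) ^ (k+1) := by
            push_cast; ring
  -- conclude
  have hfin := hdiff L (le_refl L)
  have hLL : (L:ℝ) * (L:ℝ)⁻¹ = 1 := mul_inv_cancel₀ (ne_of_gt hL')
  have hpow : (1 + q) ^ L ≤ Real.exp (Kσ * RW) := by
    have h1 : 1 + q ≤ Real.exp q := by linarith [Real.add_one_le_exp q]
    calc (1 + q) ^ L ≤ (Real.exp q) ^ L := by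
          exact pow_le_pow_left₀ (by linarith) h1 L
      _ = Real.exp ((L:ℕ) * q) := (Real.exp_nat_mul q L).symm
      _ = Real.exp (Kσ * RW) := by
          congr 1
          rw [hqdef]
          field_simp
  have hE := Real.add_one_le_exp (Kσ * RW)
  have hE0 : 0 < Real.exp (Kσ * RW) := Real.exp_pos _
  have hmain : (L:ℝ) * (L:ℝ)⁻¹ * Kσ * RX * Δ * (1 + q) ^ L ≤
      RX / RW * Real.exp (2 * Kσ * RW) * Δ := by
    rw [hLL]
    have h1 : Kσ * RX * Δ * (1 + q) ^ L ≤ Kσ * RX * Δ * Real.exp (Kσ * RW) := by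
      apply mul_le_mul_of_nonneg_left hpow
      positivity
    have h2 : Kσ * RX * Δ * Real.exp (Kσ * RW) ≤ RX / RW * Real.exp (2 * Kσ * RW) * Δ := by
      rw [div_mul_eq_mul_div, div_mul_eq_mul_div, le_div_iff₀ hRW]
      have hexp2 : Real.exp (2 * Kσ * RW) = Real.exp (Kσ * RW) * Real.exp (Kσ * RW) := by
        rw [← Real.exp_add]; ring_nf
      rw [hexp2]
      have hKE : Kσ * RW ≤ Real.exp (Kσ * RW) := by linarith
      nlinarith [mul_le_mul_of_nonneg_right hKE
        (mul_nonneg (mul_nonneg hRX hΔ0) hE0.le)]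
    calc (1:ℝ) * Kσ * RX * Δ * (1 + q) ^ L = Kσ * RX * Δ * (1 + q) ^ L := by ring
      _ ≤ Kσ * RX * Δ * Real.exp (Kσ * RW) := h1
      _ ≤ RX / RW * Real.exp (2 * Kσ * RW) * Δ := h2
  exact le_trans hfin hmain
end
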